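/- arXiv:1911.11591 — 4 statements merged into one kernel-verified Lean document; each statement's English description precedes it below -/
import Mathlib

section
/- Let a, b be integers with b - a \ge 2 and 1 < \alpha < 2. Then G(t,s) > 0 for all t \in \{a+1, \ldots, b-1\} and s \in \{a+2, \ldots, b\}. -/
/-- Generalized rising function `x^{overline r} = Γ(x+r)/Γ(x)`; since `Real.Gamma`
vanishes at nonpositive integers and division by zero is zero in Lean, the convention
`x^{overline r} = 0` for nonpositive integer `x` holds automatically. -/
noncomputable def rising (x r : ℝ) : ℝ := Real.Gamma (x + r) / Real.Gamma x

/-- Green's function of the conjugate nabla fractional boundary value problem. -/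
noncomputable def G (a b : ℤ) (α : ℝ) (t s : ℤ) : ℝ :=
  if t ≤ s - 1 then
    (rising ((b : ℝ) - s + 1) (α - 1) / rising ((b : ℝ) - a) (α - 1))
      * rising ((t : ℝ) - a) (α - 1) / Real.Gamma α
  else
    ((rising ((b : ℝ) - s + 1) (α - 1) / rising ((b : ℝ) - a) (α - 1))
      * rising ((t : ℝ) - a) (α - 1) - rising ((t : ℝ) - s + 1) (α - 1)) / Real.Gamma α

lemma rising_pos {β : ℝ} (hβ : 0 < β) {n : ℕ} (hn : 1 ≤ n) :
    0 < rising (n : ℝ) β := by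
  have hn0 : (0:ℝ) < n := by exact_mod_cast hn
  unfold rising
  exact div_pos (Real.Gamma_pos_of_pos (by linarith)) (Real.Gamma_pos_of_pos hn0)

lemma rising_succ {β : ℝ} (hβ : 0 < β) {n : ℕ} (hn : 1 ≤ n) :
    rising ((n+1 : ℕ) : ℝ) β = rising (n : ℝ) β * (((n:ℝ)+β)/n) := by
  have hn0 : (0:ℝ) < n := by exact_mod_cast hn
  have h1 : Real.Gamma ((n:ℝ)+1+β) = ((n:ℝ)+β) * Real.Gamma ((n:ℝ)+β) := by
    have := Real.Gamma_add_one (s := (n:ℝ)+β) (by positivity)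
    rw [show (n:ℝ)+1+β = (n:ℝ)+β+1 by ring, this]
  have h2 : Real.Gamma ((n:ℝ)+1) = (n:ℝ) * Real.Gamma (n:ℝ) :=
    Real.Gamma_add_one (ne_of_gt hn0)
  unfold rising
  push_cast
  rw [h1, h2, mul_div_mul_comm]
  ring

lemma rising_step {β : ℝ} (hβ : 0 < β) {k j : ℕ} (hk : 1 ≤ k) (hkj : k + 1 ≤ j) :
    rising (k:ℝ) β * rising ((j+1 : ℕ):ℝ) β < rising ((k+1 : ℕ):ℝ) β * rising (j:ℝ) β := by
  have hj : 1 ≤ j := by omega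
  have hk0 : (0:ℝ) < k := by exact_mod_cast hk
  have hj0 : (0:ℝ) < j := by exact_mod_cast hj
  have hkj0 : (k:ℝ) < j := by exact_mod_cast hkj
  rw [rising_succ hβ hj, rising_succ hβ hk]
  have h1 := rising_pos hβ hk
  have h2 := rising_pos hβ hj
  have hlt : ((j:ℝ)+β)/j < ((k:ℝ)+β)/k := by
    rw [div_lt_div_iff₀ hj0 hk0]
    nlinarith
  calc rising (k:ℝ) β * (rising (j:ℝ) β * (((j:ℝ)+β)/j))
      < rising (k:ℝ) β * (rising (j:ℝ) β * (((k:ℝ)+β)/k)) := by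
        apply mul_lt_mul_of_pos_left _ h1
        exact mul_lt_mul_of_pos_left hlt h2
    _ = rising (k:ℝ) β * (((k:ℝ)+β)/k) * rising (j:ℝ) β := by ring

lemma rising_chain {β : ℝ} (hβ : 0 < β) :
    ∀ d q j : ℕ, 1 ≤ d → 1 ≤ q → q + d ≤ j →
    rising (q:ℝ) β * rising ((j+d : ℕ):ℝ) β < rising ((q+d : ℕ):ℝ) β * rising (j:ℝ) β := by
  intro d
  induction d with
  | zero => omega
  | succ d ih =>
    intro q j hd hq hqj
    rcases Nat.eq_zero_or_pos d with h0 | hdpos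
    · subst h0
      exact rising_step hβ hq (by omega)
    · have step1 : rising (q:ℝ) β * rising ((j+(d+1) : ℕ):ℝ) β
          < rising ((q+1 : ℕ):ℝ) β * rising ((j+d : ℕ):ℝ) β := by
        have := rising_step hβ (k := q) (j := j + d) hq (by omega)
        simpa [show j + d + 1 = j + (d+1) by omega] using this
      have step2 : rising ((q+1 : ℕ):ℝ) β * rising ((j+d : ℕ):ℝ) β
          < rising ((q+(d+1) : ℕ):ℝ) β * rising (j:ℝ) β := by
        have := ih (q+1) j hdpos (by omega) (by omega)
        simpa [show q + 1 + d = q + (d+1) by omega] using this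
      exact step1.trans step2

theorem G_pos (a b : ℤ) (hab : a + 2 ≤ b) (α : ℝ)
    (hα1 : 1 < α) (hα2 : α < 2) (t s : ℤ)
    (ht1 : a + 1 ≤ t) (ht2 : t ≤ b - 1) (hs1 : a + 2 ≤ s) (hs2 : s ≤ b) :
    0 < G a b α t s := by
  set β := α - 1 with hβdef
  have hβ : 0 < β := by simp [hβdef]; linarith
  have hΓα : 0 < Real.Gamma α := Real.Gamma_pos_of_pos (by linarith)
  -- natural number versions of the arguments
  set m : ℕ := (b - s + 1).toNat with hm
  set p : ℕ := (t - a).toNat with hp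
  set n : ℕ := (b - a).toNat with hn
  have hmz : ((m:ℤ)) = b - s + 1 := Int.toNat_of_nonneg (by omega)
  have hpz : ((p:ℤ)) = t - a := Int.toNat_of_nonneg (by omega)
  have hnz : ((n:ℤ)) = b - a := Int.toNat_of_nonneg (by omega)
  have hmr : ((m:ℝ)) = (b:ℝ) - s + 1 := by exact_mod_cast congrArg (fun z : ℤ => (z : ℝ)) hmz
  have hpr : ((p:ℝ)) = (t:ℝ) - a := by exact_mod_cast congrArg (fun z : ℤ => (z : ℝ)) hpz
  have hnr : ((n:ℝ)) = (b:ℝ) - a := by exact_mod_cast congrArg (fun z : ℤ => (z : ℝ)) hnz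
  have hm1 : 1 ≤ m := by omega
  have hp1 : 1 ≤ p := by omega
  have hn1 : 1 ≤ n := by omega
  have hmpos := rising_pos hβ hm1
  have hppos := rising_pos hβ hp1
  have hnpos := rising_pos hβ hn1
  by_cases hts : t ≤ s - 1
  · rw [G, if_pos hts, ← hmr, ← hpr, ← hnr]
    positivity
  · rw [G, if_neg hts, ← hmr, ← hpr, ← hnr]
    push_neg at hts
    set q : ℕ := (t - s + 1).toNat with hq
    have hqz : ((q:ℤ)) = t - s + 1 := Int.toNat_of_nonneg (by omega)
    have hqr : ((q:ℝ)) = (t:ℝ) - s + 1 := by exact_mod_cast congrArg (fun z : ℤ => (z : ℝ)) hqz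
    have hq1 : 1 ≤ q := by omega
    have hqm : q < m := by omega
    have hqp : q < p := by omega
    have hsum : n + q = m + p := by omega
    rw [← hqr]
    -- key inequality: rising q * rising n < rising m * rising p
    have key : rising (q:ℝ) β * rising (n:ℝ) β < rising (m:ℝ) β * rising (p:ℝ) β := by
      rcases le_total m p with hmp | hmp
      · have := rising_chain hβ (m - q) q p (by omega) hq1 (by omega)
        have e1 : p + (m - q) = n := by omega
        have e2 : q + (m - q) = m := by omega
        rw [e1, e2] at this
        exact this
      · have := rising_chain hβ (p - q) q m (by omega) hq1 (by omega)
        have e1 : m + (p - q) = n := by omega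
        have e2 : q + (p - q) = p := by omega
        rw [e1, e2] at this
        calc rising (q:ℝ) β * rising (n:ℝ) β < rising (p:ℝ) β * rising (m:ℝ) β := this
          _ = rising (m:ℝ) β * rising (p:ℝ) β := by ring
    apply div_pos _ hΓα
    rw [sub_pos, div_mul_eq_mul_div, lt_div_iff₀ hnpos]
    linarith [key, mul_comm (rising (q:ℝ) β) (rising (n:ℝ) β)]
end

section
/- Let a, b be integers with b - a \ge 2 and 1 < \alpha < 2. For each fixed s \in \{a+2, \ldots, b\}, the maximum of G(t,s) over t \in \{a+1, \ldots, b-1\} is attained at t = s - 1, i.e., \max_{t} G(t,s) = G(s-1, s). -/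
lemma rising_zero_left (r : ℝ) : rising 0 r = 0 := by
  simp [rising]

lemma rising_nonneg {x r : ℝ} (hx : 0 ≤ x) (hxr : 0 ≤ x + r) : 0 ≤ rising x r := by
  unfold rising; positivity

/-- At `x = 0` this relies on `rising 0 r = 0`, i.e. on `Real.Gamma 0 = 0`. -/
lemma rising_add_one_sub_rising {x r : ℝ} (h : x + r ≠ 0) :
    rising (x + 1) r - rising x r = r * rising (x + 1) (r - 1) := by
  unfold rising
  rw [show x + 1 + r = x + r + 1 by ring, show x + 1 + (r - 1) = x + r by ring,
    Real.Gamma_add_one h]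
  rcases eq_or_ne x 0 with rfl | hx
  · simp
  rw [Real.Gamma_add_one hx]
  rcases eq_or_ne (Real.Gamma x) 0 with hΓ | hΓ
  · simp [hΓ]
  field_simp
  ring

lemma rising_le_rising_add_one {x r : ℝ} (hr : 0 < r) (hx : 0 ≤ x) :
    rising x r ≤ rising (x + 1) r := by
  have h := rising_add_one_sub_rising (x := x) (r := r) (by positivity)
  have := rising_nonneg (x := x + 1) (r := r - 1) (by linarith) (by linarith)
  nlinarith

lemma rising_add_one_le_rising {x r : ℝ} (hr : r ≤ 0) (hxr : 0 < x + r) :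
    rising (x + 1) r ≤ rising x r := by
  have h := rising_add_one_sub_rising hxr.ne'
  have := rising_nonneg (x := x + 1) (r := r - 1) (by linarith) (by linarith)
  nlinarith

lemma rising_intCast_le_of_le {r : ℝ} (hr : 0 < r) {m n : ℤ} (hm : 0 ≤ m) (hmn : m ≤ n) :
    rising m r ≤ rising n r := by
  induction n, hmn using Int.leInduction with
  | base => rfl
  | succ n hmn ih =>
    push_cast
    exact ih.trans (rising_le_rising_add_one hr (by exact_mod_cast hm.trans hmn))

lemma rising_intCast_le_of_ge {r : ℝ} (hr : r ≤ 0) {m n : ℤ} (hm : 0 < m + r) (hmn : m ≤ n) :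
    rising n r ≤ rising m r := by
  induction n, hmn using Int.leInduction with
  | base => rfl
  | succ n hmn ih =>
    push_cast
    refine (rising_add_one_le_rising hr ?_).trans ih
    have : (m : ℝ) ≤ n := by exact_mod_cast hmn
    linarith

lemma mul_rising_add_sub_rising_le {r c : ℝ} (hr0 : 0 < r) (hr1 : r ≤ 1) (hc : c ≤ 1)
    {d n : ℤ} (hd : 0 ≤ d) (hn : 0 ≤ n) :
    c * rising ((n + d : ℤ) : ℝ) r - rising (n : ℝ) r ≤ c * rising (d : ℝ) r := by
  induction n, hn using Int.leInduction with
  | base => simp [rising_zero_left]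
  | succ n hn ih =>
    have hn' : (0 : ℝ) ≤ n := by exact_mod_cast hn
    have hd' : (0 : ℝ) ≤ d := by exact_mod_cast hd
    have hdiff_n := rising_add_one_sub_rising (x := n) (r := r) (by positivity)
    have hdiff_nd := rising_add_one_sub_rising (x := n + d) (r := r) (by positivity)
    have hanti := rising_intCast_le_of_ge (r := r - 1) (by linarith) (m := n + 1) (n := n + 1 + d)
      (by push_cast; linarith) (by omega)
    have hnonneg := rising_nonneg (x := n + 1 + d) (r := r - 1) (by positivity) (by linarith)
    push_cast at ih hanti ⊢
    rw [show (n : ℝ) + 1 + d = n + d + 1 by ring] at hanti hnonneg ⊢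
    have hdecr : c * rising (n + d + 1) (r - 1) ≤ rising (n + 1) (r - 1) := by nlinarith
    nlinarith

theorem G_max_at_diag_general (a b : ℤ) (α : ℝ)
    (hα1 : 1 < α) (hα2 : α < 2) (s : ℤ) (hs1 : a + 2 ≤ s) (hs2 : s ≤ b) :
    IsGreatest ((fun t : ℤ => G a b α t s) '' {t : ℤ | a + 1 ≤ t ∧ t ≤ b - 1})
      (G a b α (s - 1) s) := by
  have hβ0 : 0 < α - 1 := by linarith
  have has : (a : ℝ) + 2 ≤ s := by exact_mod_cast hs1
  have hsb : (s : ℝ) ≤ b := by exact_mod_cast hs2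
  set C := rising ((b : ℝ) - s + 1) (α - 1) / rising ((b : ℝ) - a) (α - 1)
  have hC0 : 0 ≤ C := by
    apply div_nonneg <;> apply rising_nonneg <;> linarith
  have hC1 : C ≤ 1 := by
    have h := rising_intCast_le_of_le hβ0 (m := b - s + 1) (n := b - a) (by omega) (by omega)
    push_cast at h
    exact div_le_one_of_le₀ h (rising_nonneg (by linarith) (by linarith))
  have hdiag : G a b α (s - 1) s = C * rising ((s : ℝ) - 1 - a) (α - 1) / Real.Gamma α := by
    simp [G, C]
  refine ⟨⟨s - 1, ⟨by omega, by omega⟩, rfl⟩, ?_⟩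
  rintro _ ⟨t, ⟨ht1, ht2⟩, rfl⟩
  rw [hdiag]
  dsimp only [G]
  split_ifs with hts
  · have h := rising_intCast_le_of_le hβ0 (m := t - a) (n := s - 1 - a) (by omega) (by omega)
    push_cast at h
    gcongr
  · have h := mul_rising_add_sub_rising_le hβ0 (by linarith) hC1 (d := s - 1 - a)
      (n := t - s + 1) (by omega) (by omega)
    rw [show t - s + 1 + (s - 1 - a) = t - a by ring] at h
    push_cast at h
    gcongr

theorem G_max_at_diag (a b : ℤ) (hab : a + 2 ≤ b) (α : ℝ)
    (hα1 : 1 < α) (hα2 : α < 2) (s : ℤ) (hs1 : a + 2 ≤ s) (hs2 : s ≤ b) :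
    IsGreatest ((fun t : ℤ => G a b α t s) '' {t : ℤ | a + 1 ≤ t ∧ t ≤ b - 1})
      (G a b α (s - 1) s) :=
  G_max_at_diag_general a b α hα1 hα2 s hs1 hs2
end

section
/- Let a, b be integers with b - a \ge 2, let 1 < \alpha < 2, and let h : \{a+1, \ldots, b\} \to \mathbb{R}. Then the function u(t) = \sum_{s=a+1}^{b} G(t,s) h(s), t \in \{a, \ldots, b\}, is the unique function satisfying the nabla fractional boundary value problem (\nabla^{\alpha}_{\rho(a)} u)(t) + h(t) = 0 for t \in \{a+2, \ldots, b\}, u(a) = 0, u(b) = 0. -/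
/-- The `ν`-th order nabla sum based at `a - 1`:
`(∇^{-ν}_{a-1} u)(t) = ∑_{s=a}^{t} H_{ν-1}(t, s-1) u(s)`, where
`H_{ν-1}(t, s-1) = (t-s+1)^{overline{ν-1}}/Γ(ν)`. -/
noncomputable def nablaSum (ν : ℝ) (a : ℤ) (u : ℤ → ℝ) (t : ℤ) : ℝ :=
  ∑ s ∈ Finset.Icc a t, (rising ((t : ℝ) - s + 1) (ν - 1) / Real.Gamma ν) * u s

/-- The Riemann–Liouville nabla fractional difference of order `α` (with `1 < α < 2`)
based at `ρ(a) = a - 1`: `(∇^α_{a-1} u)(t) = ∇² (∇^{-(2-α)}_{a-1} u)(t)`. -/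
noncomputable def nablaDiff (α : ℝ) (a : ℤ) (u : ℤ → ℝ) (t : ℤ) : ℝ :=
  nablaSum (2 - α) a u t - 2 * nablaSum (2 - α) a u (t - 1) + nablaSum (2 - α) a u (t - 2)

open Finset

theorem Ring.multichoose_add {R : Type*} [CommRing R] [BinomialRing R] (r s : R) (k : ℕ) :
    multichoose (r + s) k = ∑ ij ∈ antidiagonal k, multichoose r ij.1 * multichoose s ij.2 := by
  -- `choose (-r) k = (-1)^k • multichoose r k` reduces this to Chu–Vandermonde for `choose`.
  have hk := choose_neg' (r + s) k
  rw [neg_add, add_choose_eq k (Commute.all _ _)] at hk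
  rw [← one_smul ℤˣ (multichoose (r + s) k), ← Int.units_mul_self (k : ℤ).negOnePow,
    mul_smul, ← hk, smul_sum]
  refine sum_congr rfl fun ij hij => ?_
  rw [choose_neg', choose_neg', smul_mul_smul_comm, smul_smul, ← Int.negOnePow_add,
    ← Nat.cast_add, mem_antidiagonal.mp hij, Int.units_mul_self, one_smul]

theorem Real.Gamma_natCast_add {x : ℝ} (hx : 0 < x) (n : ℕ) :
    Gamma (n + x) = Gamma x * (ascPochhammer ℝ n).eval x := by
  induction n with
  | zero => simp
  | succ n ih =>
    rw [ascPochhammer_succ_eval, ← mul_assoc, ← ih, Nat.cast_succ, add_right_comm,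
      Gamma_add_one (by positivity), mul_comm, add_comm x]

lemma rising_intCast_of_nonpos {m : ℤ} (hm : m ≤ 0) (r : ℝ) : rising m r = 0 := by
  obtain ⟨n, rfl⟩ := Int.exists_eq_neg_ofNat hm
  simp [rising, Real.Gamma_neg_nat_eq_zero]

lemma rising_natCast_add_one {x : ℝ} (hx : 0 < x) (n : ℕ) :
    rising (n + 1) (x - 1) = Real.Gamma x * Ring.multichoose x n := by
  have hfac : (n.factorial : ℝ) * Ring.multichoose x n = (ascPochhammer ℝ n).eval x := by
    rw [← nsmul_eq_mul, Ring.factorial_nsmul_multichoose_eq_ascPochhammer,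
      Polynomial.ascPochhammer_smeval_eq_eval]
  rw [rising, show (n : ℝ) + 1 + (x - 1) = n + x by ring, Real.Gamma_natCast_add hx,
    Real.Gamma_nat_eq_factorial, ← hfac]
  field_simp

/-- `risingKernel μ s t = (t - ρ(s))^{\overline{μ-1}} = Γ(μ) H_{μ-1}(t, ρ(s))`. -/
noncomputable def risingKernel (μ : ℝ) (s t : ℤ) : ℝ := rising ((t : ℝ) - s + 1) (μ - 1)

lemma risingKernel_of_lt (μ : ℝ) {s t : ℤ} (h : t < s) : risingKernel μ s t = 0 := by
  rw [risingKernel, show (t : ℝ) - s + 1 = ((t - s + 1 : ℤ) : ℝ) by push_cast; ring]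
  exact rising_intCast_of_nonpos (by omega) _

lemma risingKernel_add_natCast {μ : ℝ} (hμ : 0 < μ) (s : ℤ) (n : ℕ) :
    risingKernel μ s (s + n) = Real.Gamma μ * Ring.multichoose μ n := by
  rw [risingKernel, ← rising_natCast_add_one hμ]
  push_cast
  ring_nf

lemma risingKernel_self {μ : ℝ} (hμ : 0 < μ) (s : ℤ) : risingKernel μ s s = Real.Gamma μ := by
  simpa [Ring.multichoose_zero_right] using risingKernel_add_natCast hμ s 0

lemma risingKernel_pos {μ : ℝ} (hμ : 0 < μ) {s t : ℤ} (h : s ≤ t) : 0 < risingKernel μ s t := by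
  have : (s : ℝ) ≤ t := by exact_mod_cast h
  exact div_pos (Real.Gamma_pos_of_pos (by linarith)) (Real.Gamma_pos_of_pos (by linarith))

lemma risingKernel_two (s t : ℤ) :
    risingKernel 2 s t = if s ≤ t then (t : ℝ) - s + 1 else 0 := by
  split_ifs with h
  · obtain ⟨n, rfl⟩ := Int.le.dest h
    rw [risingKernel_add_natCast two_pos, Ring.multichoose_two, Real.Gamma_two]
    push_cast
    ring
  · exact risingKernel_of_lt 2 (by omega)

lemma nablaSum_eq_sum_risingKernel (ν : ℝ) (a : ℤ) (u : ℤ → ℝ) (t : ℤ) :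
    nablaSum ν a u t = ∑ r ∈ Icc a t, risingKernel ν r t / Real.Gamma ν * u r :=
  rfl

lemma Int.sum_Icc_add_natCast {M : Type*} [AddCommMonoid M] (f : ℤ → M) (s : ℤ) (n : ℕ) :
    ∑ r ∈ Icc s (s + n), f r = ∑ ij ∈ antidiagonal n, f (s + ij.1) := by
  rw [Int.Icc_eq_finset_map, sum_map, Nat.sum_antidiagonal_eq_sum_range_succ_mk,
    show (s + n + 1 - s).toNat = n + 1 by omega]
  rfl

theorem nablaSum_risingKernel {μ ν : ℝ} (hμ : 0 < μ) (hν : 0 < ν) {a s : ℤ} (has : a ≤ s)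
    (t : ℤ) :
    nablaSum ν a (risingKernel μ s) t
      = Real.Gamma μ / Real.Gamma (μ + ν) * risingKernel (μ + ν) s t := by
  rcases lt_or_ge t s with hts | hst
  · rw [risingKernel_of_lt _ hts, mul_zero]
    exact sum_eq_zero fun r hr => by
      rw [risingKernel_of_lt μ (lt_of_le_of_lt (mem_Icc.1 hr).2 hts), mul_zero]
  obtain ⟨n, rfl⟩ := Int.le.dest hst
  have hΓν := (Real.Gamma_pos_of_pos hν).ne'
  have hΓμν := (Real.Gamma_pos_of_pos (add_pos hμ hν)).ne'
  rw [nablaSum_eq_sum_risingKernel, ← sum_subset (Icc_subset_Icc_left has) fun r hr hr' => by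
      rw [risingKernel_of_lt μ (by simp only [mem_Icc] at hr hr'; omega), mul_zero],
    Int.sum_Icc_add_natCast]
  calc ∑ ij ∈ antidiagonal n,
        risingKernel ν (s + ij.1) (s + n) / Real.Gamma ν * risingKernel μ s (s + ij.1)
      = ∑ ij ∈ antidiagonal n,
          Real.Gamma μ * (Ring.multichoose μ ij.1 * Ring.multichoose ν ij.2) :=
        sum_congr rfl fun ij hij => by
          rw [← mem_antidiagonal.mp hij, Nat.cast_add, ← add_assoc,
            risingKernel_add_natCast hν, risingKernel_add_natCast hμ]
          field_simp
    _ = Real.Gamma μ / Real.Gamma (μ + ν) * risingKernel (μ + ν) s (s + n) := by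
      rw [← mul_sum, ← Ring.multichoose_add, risingKernel_add_natCast (add_pos hμ hν)]
      field_simp

section Linearity

variable {ν α : ℝ} {a t : ℤ}

lemma nablaSum_sub (u v : ℤ → ℝ) :
    nablaSum ν a (fun r => u r - v r) t = nablaSum ν a u t - nablaSum ν a v t := by
  simp only [nablaSum, mul_sub, sum_sub_distrib]

lemma nablaSum_mul_const (u : ℤ → ℝ) (c : ℝ) :
    nablaSum ν a (fun r => u r * c) t = nablaSum ν a u t * c := by
  simp only [nablaSum, sum_mul, mul_assoc]

lemma nablaSum_sum {ι : Type*} (S : Finset ι) (F : ι → ℤ → ℝ) :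
    nablaSum ν a (fun r => ∑ i ∈ S, F i r) t = ∑ i ∈ S, nablaSum ν a (F i) t := by
  simp only [nablaSum, mul_sum]
  exact sum_comm

lemma nablaDiff_sub (u v : ℤ → ℝ) :
    nablaDiff α a (fun r => u r - v r) t = nablaDiff α a u t - nablaDiff α a v t := by
  simp only [nablaDiff, nablaSum_sub]
  ring

lemma nablaDiff_mul_const (u : ℤ → ℝ) (c : ℝ) :
    nablaDiff α a (fun r => u r * c) t = nablaDiff α a u t * c := by
  simp only [nablaDiff, nablaSum_mul_const]
  ring

lemma nablaDiff_sum {ι : Type*} (S : Finset ι) (F : ι → ℤ → ℝ) :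
    nablaDiff α a (fun r => ∑ i ∈ S, F i r) t = ∑ i ∈ S, nablaDiff α a (F i) t := by
  simp only [nablaDiff, nablaSum_sum, mul_sum, ← sum_sub_distrib, ← sum_add_distrib]

end Linearity

theorem nablaDiff_risingKernel {α : ℝ} (h0 : 0 < α) (h2 : α < 2) {a s : ℤ} (has : a ≤ s)
    (t : ℤ) : nablaDiff α a (risingKernel α s) t = if t = s then Real.Gamma α else 0 := by
  simp only [nablaDiff, nablaSum_risingKernel h0 (sub_pos.2 h2) has, add_sub_cancel,
    Real.Gamma_two, div_one, risingKernel_two]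
  rcases lt_trichotomy t s with h | rfl | h
  · simp [show ¬ s ≤ t by omega, show ¬ s ≤ t - 1 by omega, show ¬ s ≤ t - 2 by omega, h.ne]
  · simp
  · obtain rfl | h' := (Int.add_one_le_iff.2 h).eq_or_lt
    · rw [if_pos (by omega : s ≤ s + 1), if_pos (by omega : s ≤ s + 1 - 1),
        if_neg (by omega : ¬ s ≤ s + 1 - 2), if_neg (by omega : ¬ s + 1 = s)]
      push_cast
      ring
    · simp only [h.le, show s ≤ t - 1 by omega, show s ≤ t - 2 by omega, h.ne', ↓reduceIte]
      push_cast
      ring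

lemma nablaDiff_eq_self_of_eq_zero {α : ℝ} (h2 : α < 2) {a t : ℤ} (hat : a + 2 ≤ t)
    {w : ℤ → ℝ} (hw : ∀ r ∈ Ico a t, w r = 0) : nablaDiff α a w t = w t := by
  have hzero : ∀ t' < t, nablaSum (2 - α) a w t' = 0 := fun t' ht' =>
    sum_eq_zero fun r hr => by
      rw [hw r (by simp only [mem_Icc, mem_Ico] at hr ⊢; omega), mul_zero]
  have hself : nablaSum (2 - α) a w t = w t := by
    rw [nablaSum_eq_sum_risingKernel, sum_eq_single_of_mem t (by simp only [mem_Icc]; omega) fun r hr hrt => by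
      rw [hw r (by simp only [mem_Icc, mem_Ico] at hr ⊢; omega), mul_zero],
      risingKernel_self (sub_pos.2 h2), div_self (Real.Gamma_pos_of_pos (sub_pos.2 h2)).ne',
      one_mul]
  rw [nablaDiff, hself, hzero _ (by omega), hzero _ (by omega)]
  ring

theorem eq_zero_of_nablaDiff_eq_zero {α : ℝ} (h2 : α < 2) {a b : ℤ} {w : ℤ → ℝ}
    (ha : w a = 0) (ha1 : w (a + 1) = 0) (hw : ∀ t ∈ Icc (a + 2) b, nablaDiff α a w t = 0) :
    ∀ t ∈ Icc a b, w t = 0 := by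
  have hvanish : ∀ n, a + 2 ≤ n → ∀ r ∈ Ico a n, r ≤ b → w r = 0 := by
    intro n hn
    induction n, hn using Int.leInduction with
    | base =>
      intro r hr _
      obtain rfl | rfl : r = a ∨ r = a + 1 := by simp only [mem_Ico] at hr; omega
      exacts [ha, ha1]
    | succ n hn ih =>
      intro r hr hrb
      obtain hrn | rfl : r < n ∨ r = n := by simp only [mem_Ico] at hr; omega
      · exact ih r (mem_Ico.2 ⟨(mem_Ico.1 hr).1, hrn⟩) hrb
      · rw [← nablaDiff_eq_self_of_eq_zero h2 hn fun r' hr' => ih r' hr' (by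
          simp only [mem_Ico] at hr'; omega)]
        exact hw r (mem_Icc.2 ⟨hn, hrb⟩)
  intro t ht
  exact hvanish (max (a + 2) (t + 1)) (le_max_left _ _) t
    (by simp only [mem_Icc, mem_Ico] at ht ⊢; omega) (mem_Icc.1 ht).2

theorem eq_of_nablaDiff_eq {α : ℝ} (h0 : 0 < α) (h2 : α < 2) {a b : ℤ} (hab : a < b)
    {u v : ℤ → ℝ} (hd : ∀ t ∈ Icc (a + 2) b, nablaDiff α a u t = nablaDiff α a v t)
    (ha : u a = v a) (hb : u b = v b) : ∀ t ∈ Icc a b, u t = v t := by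
  set φ := risingKernel α (a + 1)
  set c := (u (a + 1) - v (a + 1)) / Real.Gamma α
  have hΓ := (Real.Gamma_pos_of_pos h0).ne'
  have hw := eq_zero_of_nablaDiff_eq_zero h2 (a := a) (b := b) (w := fun t => u t - v t - φ t * c)
    (by simp [ha, φ, risingKernel_of_lt α (lt_add_one a)])
    (by simp only [φ, c, risingKernel_self h0]; field_simp; ring)
    fun t ht => by
      rw [nablaDiff_sub, nablaDiff_sub, nablaDiff_mul_const,
        nablaDiff_risingKernel h0 h2 (by omega), if_neg (by simp only [mem_Icc] at ht; omega),
        hd t ht]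
      ring
  have hc : c = 0 := by
    have := hw b (mem_Icc.2 ⟨hab.le, le_rfl⟩)
    simp only [hb, sub_self, zero_sub, neg_eq_zero, mul_eq_zero] at this
    exact this.resolve_left (risingKernel_pos h0 (by omega)).ne'
  intro t ht
  have := hw t ht
  simp only [hc, mul_zero, sub_zero] at this
  linarith

lemma G_eq_risingKernel (a b : ℤ) (α : ℝ) (t s : ℤ) :
    G a b α t s = risingKernel α (a + 1) t
        * (risingKernel α s b / risingKernel α (a + 1) b / Real.Gamma α)
      - risingKernel α s t * (Real.Gamma α)⁻¹ := by
  have hφ : ∀ x : ℤ, risingKernel α (a + 1) x = rising ((x : ℝ) - a) (α - 1) := fun x => by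
    rw [risingKernel]; push_cast; ring_nf
  rw [G, hφ, hφ]
  split_ifs with h
  · rw [risingKernel_of_lt α (s := s) (t := t) (by omega)]
    simp only [risingKernel]
    ring
  · simp only [risingKernel]
    ring

lemma G_left_eq_zero (b : ℤ) (α : ℝ) {a s : ℤ} (hs : a + 1 ≤ s) : G a b α a s = 0 := by
  rw [G_eq_risingKernel, risingKernel_of_lt α (lt_add_one a), risingKernel_of_lt α hs]
  ring

lemma G_right_eq_zero {α : ℝ} (h0 : 0 < α) {a b : ℤ} (hab : a < b) (s : ℤ) :
    G a b α b s = 0 := by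
  have := (risingKernel_pos h0 (by omega : a + 1 ≤ b)).ne'
  rw [G_eq_risingKernel]
  field_simp
  ring

lemma nablaDiff_G {α : ℝ} (h0 : 0 < α) (h2 : α < 2) (b : ℤ) {a s t : ℤ} (hs : a + 1 ≤ s)
    (ht : a + 2 ≤ t) : nablaDiff α a (fun t' => G a b α t' s) t = if t = s then -1 else 0 := by
  simp only [G_eq_risingKernel]
  rw [nablaDiff_sub, nablaDiff_mul_const, nablaDiff_mul_const,
    nablaDiff_risingKernel h0 h2 (by omega), nablaDiff_risingKernel h0 h2 (by omega),
    if_neg (by omega)]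
  have := (Real.Gamma_pos_of_pos h0).ne'
  split_ifs <;> simp [this]

lemma nablaDiff_greenSum {α : ℝ} (h0 : 0 < α) (h2 : α < 2) {a b : ℤ} (h : ℤ → ℝ) {t : ℤ}
    (ht : t ∈ Icc (a + 2) b) :
    nablaDiff α a (fun t' => ∑ s ∈ Icc (a + 1) b, G a b α t' s * h s) t = -h t := by
  rw [nablaDiff_sum, sum_congr rfl fun s hs => by
    rw [nablaDiff_mul_const, nablaDiff_G h0 h2 b (mem_Icc.1 hs).1 (mem_Icc.1 ht).1]]
  have : t ∈ Icc (a + 1) b := by simp only [mem_Icc] at ht ⊢; omega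
  simp [ite_mul, this]

theorem bvp_unique_solution (a b : ℤ) (hab : a + 2 ≤ b) (α : ℝ)
    (hα1 : 1 < α) (hα2 : α < 2) (h : ℤ → ℝ) :
    (∀ t ∈ Finset.Icc (a + 2) b,
        nablaDiff α a (fun t' => ∑ s ∈ Finset.Icc (a + 1) b, G a b α t' s * h s) t + h t = 0) ∧
    (∑ s ∈ Finset.Icc (a + 1) b, G a b α a s * h s) = 0 ∧
    (∑ s ∈ Finset.Icc (a + 1) b, G a b α b s * h s) = 0 ∧
    (∀ u : ℤ → ℝ,
        (∀ t ∈ Finset.Icc (a + 2) b, nablaDiff α a u t + h t = 0) →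
        u a = 0 → u b = 0 →
        ∀ t ∈ Finset.Icc a b, u t = ∑ s ∈ Finset.Icc (a + 1) b, G a b α t s * h s) := by
  have hα0 : 0 < α := by linarith
  have hleft : ∑ s ∈ Finset.Icc (a + 1) b, G a b α a s * h s = 0 :=
    sum_eq_zero fun s hs => by rw [G_left_eq_zero b α (mem_Icc.1 hs).1, zero_mul]
  have hright : ∑ s ∈ Finset.Icc (a + 1) b, G a b α b s * h s = 0 :=
    sum_eq_zero fun s _ => by rw [G_right_eq_zero hα0 (by omega), zero_mul]
  refine ⟨fun t ht => by rw [nablaDiff_greenSum hα0 hα2 h ht, neg_add_cancel], hleft, hright,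
    fun u hu hua hub => eq_of_nablaDiff_eq hα0 hα2 (by omega) (fun t ht => ?_)
      (hua.trans hleft.symm) (hub.trans hright.symm)⟩
  rw [nablaDiff_greenSum hα0 hα2 h ht]
  linarith [hu t ht]
end

section
/- Let X be a Banach space and T_1, T_2 : X \times X \to X operators satisfying \|T_1(u_1,u_2) - T_1(v_1,v_2)\| \le k_1\|u_1-v_1\| + k_2\|u_2-v_2\| and \|T_2(u_1,u_2) - T_2(v_1,v_2)\| \le k_3\|u_1-v_1\| + k_4\|u_2-v_2\|, with nonnegative constants k_i. If the matrix H = [[k_1,k_2],[k_3,k_4]] has powers converging to zero (equivalently spectral radius less than one), then the system u_1 = T_1(u_1,u_2), u_2 = T_2(u_1,u_2) is Ulam--Hyers stable: there exist constants C_1,C_2,C_3,C_4 > 0 such that for every \varepsilon_1,\varepsilon_2 > 0 and every (u_1^*,u_2^*) with \|u_1^* - T_1(u_1^*,u_2^*)\| \le \varepsilon_1 and \|u_2^* - T_2(u_1^*,u_2^*)\| \le \varepsilon_2, there exists a solution (v_1^*,v_2^*) of the system with \|u_1^*-v_1^*\| \le C_1\varepsilon_1 + C_2\varepsilon_2 and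 \|u_2^*-v_2^*\| \le C_3\varepsilon_1 + C_4\varepsilon_2. -/
/-!
Following Perov, view the system as one map `T u = (T₁ u, T₂ u)` on `X²` and measure distances
by the vector `(‖u₁ - v₁‖, ‖u₂ - v₂‖)`: the hypotheses say `T` is Lipschitz for this vector
distance with the nonnegative matrix `H` in place of a constant, hence `Tⁿ` is with `Hⁿ`. Since
`Hⁿ → 0`, some iterate `Tᵐ` is a contraction for the sup metric, so Banach's theorem gives a fixed
point `v` of `T`, and the a posteriori estimate `dist u v ≤ dist u (Tᵐ u) / (1 - K)`, with
`dist u (Tᵐ u)` telescoped along the orbit, bounds `dist u v` linearly by the residual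
`dist u (T u) ≤ ε₁ + ε₂`.
-/

open Filter Topology

theorem Matrix.exists_pow_sum_entries_lt_one {ι : Type*} [Fintype ι] [DecidableEq ι]
    {H : Matrix ι ι ℝ} (hconv : Tendsto (H ^ ·) atTop (𝓝 0)) :
    ∃ m : ℕ, ∑ i, ∑ j, (H ^ m) i j < 1 := by
  have hsum : Continuous fun M : Matrix ι ι ℝ => ∑ i, ∑ j, M i j := by fun_prop
  have := (hsum.tendsto 0).comp hconv
  simp only [Matrix.zero_apply, Finset.sum_const_zero] at this
  exact (this.eventually_lt_const one_pos).exists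

section

variable {ι : Type*} [Fintype ι] {E : ι → Type*}

def MatrixLipschitzWith [∀ i, PseudoMetricSpace (E i)] (H : Matrix ι ι ℝ)
    (f : (∀ i, E i) → ∀ i, E i) : Prop :=
  ∀ p q i, dist (f p i) (f q i) ≤ ∑ j, H i j * dist (p j) (q j)

namespace MatrixLipschitzWith

section PseudoMetric

variable [∀ i, PseudoMetricSpace (E i)] {H : Matrix ι ι ℝ} {f : (∀ i, E i) → ∀ i, E i}

theorem iterate [DecidableEq ι] (hH : ∀ i j, 0 ≤ H i j) (hf : MatrixLipschitzWith H f)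
    (n : ℕ) : MatrixLipschitzWith (H ^ n) f^[n] := by
  induction n with
  | zero =>
    intro p q i
    simp [Matrix.one_apply]
  | succ n ih =>
    intro p q i
    rw [Function.iterate_succ_apply', Function.iterate_succ_apply']
    calc dist (f (f^[n] p) i) (f (f^[n] q) i)
        ≤ ∑ j, H i j * dist (f^[n] p j) (f^[n] q j) := hf _ _ i
      _ ≤ ∑ j, H i j * ∑ k, (H ^ n) j k * dist (p k) (q k) := by
        gcongr with j
        exacts [hH i j, ih p q j]
      _ = ∑ k, (H ^ (n + 1)) i k * dist (p k) (q k) := by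
        simp only [pow_succ', Matrix.mul_apply, Finset.mul_sum, Finset.sum_mul, mul_assoc]
        exact Finset.sum_comm

theorem dist_le (hH : ∀ i j, 0 ≤ H i j) (hf : MatrixLipschitzWith H f) (p q : ∀ i, E i) :
    dist (f p) (f q) ≤ (∑ i, ∑ j, H i j) * dist p q := by
  have hsum : ∀ i, 0 ≤ ∑ j, H i j := fun i => Finset.sum_nonneg fun j _ => hH i j
  refine (dist_pi_le_iff (mul_nonneg (Finset.sum_nonneg fun i _ => hsum i) dist_nonneg)).2 ?_
  intro i
  calc dist (f p i) (f q i) ≤ ∑ j, H i j * dist (p j) (q j) := hf p q i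
    _ ≤ ∑ j, H i j * dist p q := by
      gcongr with j
      exacts [hH i j, dist_le_pi_dist p q j]
    _ = (∑ j, H i j) * dist p q := (Finset.sum_mul ..).symm
    _ ≤ (∑ i, ∑ j, H i j) * dist p q :=
      mul_le_mul_of_nonneg_right (Finset.single_le_sum (fun i _ => hsum i) (Finset.mem_univ i))
        dist_nonneg

theorem dist_iterate_le [DecidableEq ι] (hH : ∀ i j, 0 ≤ H i j) (hf : MatrixLipschitzWith H f)
    (p : ∀ i, E i) (m : ℕ) :
    dist p (f^[m] p) ≤ (∑ n ∈ Finset.range m, ∑ i, ∑ j, (H ^ n) i j) * dist p (f p) := by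
  calc dist p (f^[m] p) ≤ ∑ n ∈ Finset.range m, dist (f^[n] p) (f^[n + 1] p) := by
        simpa using dist_le_range_sum_dist (fun n => f^[n] p) m
    _ ≤ ∑ n ∈ Finset.range m, (∑ i, ∑ j, (H ^ n) i j) * dist p (f p) := by
      gcongr with n
      rw [Function.iterate_succ_apply]
      exact (hf.iterate hH n).dist_le (Matrix.pow_apply_nonneg hH n) p (f p)
    _ = _ := (Finset.sum_mul ..).symm

end PseudoMetric

theorem exists_fixedPoint_dist_le [∀ i, MetricSpace (E i)] [∀ i, CompleteSpace (E i)]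
    [DecidableEq ι] {H : Matrix ι ι ℝ} {f : (∀ i, E i) → ∀ i, E i} (hH : ∀ i j, 0 ≤ H i j)
    (hconv : Tendsto (H ^ ·) atTop (𝓝 0)) (hf : MatrixLipschitzWith H f) :
    ∃ C : ℝ, ∀ p, ∃ v, f v = v ∧ dist p v ≤ C * dist p (f p) := by
  obtain ⟨m, hm⟩ := Matrix.exists_pow_sum_entries_lt_one hconv
  have hHm := Matrix.pow_apply_nonneg hH m
  set K : NNReal := ⟨∑ i, ∑ j, (H ^ m) i j,
    Finset.sum_nonneg fun i _ => Finset.sum_nonneg fun j _ => hHm i j⟩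
  have hcontr : ContractingWith K f^[m] :=
    ⟨hm, LipschitzWith.of_dist_le_mul ((hf.iterate hH m).dist_le hHm)⟩
  refine ⟨(∑ n ∈ Finset.range m, ∑ i, ∑ j, (H ^ n) i j) / (1 - K), fun p => ?_⟩
  have : Nonempty (∀ i, E i) := ⟨p⟩
  refine ⟨_, ContractingWith.isFixedPt_fixedPoint_iterate hcontr, ?_⟩
  calc dist p (hcontr.fixedPoint f^[m]) ≤ dist p (f^[m] p) / (1 - K) :=
        hcontr.dist_fixedPoint_le p
    _ ≤ _ := by
      rw [div_mul_eq_mul_div]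
      gcongr
      exact hf.dist_iterate_le hH p m

end MatrixLipschitzWith

end

theorem urs_ulam_hyers_stability_general
    {X : Type*} [NormedAddCommGroup X] [CompleteSpace X]
    (T₁ T₂ : X × X → X) (k₁ k₂ k₃ k₄ : ℝ)
    (hk₁ : 0 ≤ k₁) (hk₂ : 0 ≤ k₂) (hk₃ : 0 ≤ k₃) (hk₄ : 0 ≤ k₄)
    (hT₁ : ∀ u₁ u₂ v₁ v₂ : X,
        ‖T₁ (u₁, u₂) - T₁ (v₁, v₂)‖ ≤ k₁ * ‖u₁ - v₁‖ + k₂ * ‖u₂ - v₂‖)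
    (hT₂ : ∀ u₁ u₂ v₁ v₂ : X,
        ‖T₂ (u₁, u₂) - T₂ (v₁, v₂)‖ ≤ k₃ * ‖u₁ - v₁‖ + k₄ * ‖u₂ - v₂‖)
    (H : Matrix (Fin 2) (Fin 2) ℝ)
    (hH : H = !![k₁, k₂; k₃, k₄])
    (hconv : Tendsto (fun n : ℕ => H ^ n) atTop (nhds 0)) :
    ∃ C₁ C₂ C₃ C₄ : ℝ, 0 < C₁ ∧ 0 < C₂ ∧ 0 < C₃ ∧ 0 < C₄ ∧
      ∀ ε₁ ε₂ : ℝ, 0 < ε₁ → 0 < ε₂ →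
        ∀ u₁ u₂ : X, ‖u₁ - T₁ (u₁, u₂)‖ ≤ ε₁ → ‖u₂ - T₂ (u₁, u₂)‖ ≤ ε₂ →
          ∃ v₁ v₂ : X, v₁ = T₁ (v₁, v₂) ∧ v₂ = T₂ (v₁, v₂) ∧
            ‖u₁ - v₁‖ ≤ C₁ * ε₁ + C₂ * ε₂ ∧ ‖u₂ - v₂‖ ≤ C₃ * ε₁ + C₄ * ε₂ := by
  set T : (Fin 2 → X) → Fin 2 → X := fun u => ![T₁ (u 0, u 1), T₂ (u 0, u 1)]
  have hH_nonneg : ∀ i j, 0 ≤ H i j := by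
    subst hH; intro i j; fin_cases i <;> fin_cases j <;> assumption
  have hT : MatrixLipschitzWith H T := by
    subst hH; intro p q i
    fin_cases i <;> simp [T, Fin.sum_univ_two, dist_eq_norm, hT₁, hT₂]
  obtain ⟨C, hC⟩ := hT.exists_fixedPoint_dist_le hH_nonneg hconv
  set D := max C 1
  refine ⟨D, D, D, D, by positivity, by positivity, by positivity, by positivity, ?_⟩
  intro ε₁ ε₂ hε₁ hε₂ u₁ u₂ hu₁ hu₂
  obtain ⟨v, hv, hdist⟩ := hC ![u₁, u₂]
  have hres : dist ![u₁, u₂] (T ![u₁, u₂]) ≤ ε₁ + ε₂ := by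
    refine (dist_pi_le_iff (by positivity)).2 fun i => ?_
    fin_cases i <;> simp [T, dist_eq_norm] <;> linarith
  have hclose : dist ![u₁, u₂] v ≤ D * ε₁ + D * ε₂ := by
    rw [← mul_add]
    exact hdist.trans (mul_le_mul (le_max_left C 1) hres dist_nonneg (by positivity))
  refine ⟨v 0, v 1, (congrFun hv 0).symm, (congrFun hv 1).symm, ?_, ?_⟩
  · simpa [dist_eq_norm] using (dist_le_pi_dist _ v 0).trans hclose
  · simpa [dist_eq_norm] using (dist_le_pi_dist _ v 1).trans hclose

theorem urs_ulam_hyers_stability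
    {X : Type*} [NormedAddCommGroup X] [NormedSpace ℝ X] [CompleteSpace X]
    (T₁ T₂ : X × X → X) (k₁ k₂ k₃ k₄ : ℝ)
    (hk₁ : 0 ≤ k₁) (hk₂ : 0 ≤ k₂) (hk₃ : 0 ≤ k₃) (hk₄ : 0 ≤ k₄)
    (hT₁ : ∀ u₁ u₂ v₁ v₂ : X,
        ‖T₁ (u₁, u₂) - T₁ (v₁, v₂)‖ ≤ k₁ * ‖u₁ - v₁‖ + k₂ * ‖u₂ - v₂‖)
    (hT₂ : ∀ u₁ u₂ v₁ v₂ : X,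
        ‖T₂ (u₁, u₂) - T₂ (v₁, v₂)‖ ≤ k₃ * ‖u₁ - v₁‖ + k₄ * ‖u₂ - v₂‖)
    (H : Matrix (Fin 2) (Fin 2) ℝ)
    (hH : H = !![k₁, k₂; k₃, k₄])
    (hconv : Tendsto (fun n : ℕ => H ^ n) atTop (nhds 0)) :
    ∃ C₁ C₂ C₃ C₄ : ℝ, 0 < C₁ ∧ 0 < C₂ ∧ 0 < C₃ ∧ 0 < C₄ ∧
      ∀ ε₁ ε₂ : ℝ, 0 < ε₁ → 0 < ε₂ →
        ∀ u₁ u₂ : X, ‖u₁ - T₁ (u₁, u₂)‖ ≤ ε₁ → ‖u₂ - T₂ (u₁, u₂)‖ ≤ ε₂ →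
          ∃ v₁ v₂ : X, v₁ = T₁ (v₁, v₂) ∧ v₂ = T₂ (v₁, v₂) ∧
            ‖u₁ - v₁‖ ≤ C₁ * ε₁ + C₂ * ε₂ ∧ ‖u₂ - v₂‖ ≤ C₃ * ε₁ + C₄ * ε₂ :=
  urs_ulam_hyers_stability_general T₁ T₂ k₁ k₂ k₃ k₄ hk₁ hk₂ hk₃ hk₄ hT₁ hT₂ H hH hconv
end
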